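/- Let L be an α-stable Lévy process with scale C > 0 and skewness β ∈ [−1,1], where α ∈ (0,2), α ≠ 1, let p > α, and let Y : [0,∞) → Ω → ℝ be any stochastic process such that V_p^n(Y)_t → 0 in probability as n → ∞ for every t > 0. Then for every N > 0, sup_{0 ≤ t ≤ N} |V_p^n(L+Y)_t − V_p^n(L)_t| → 0 in probability as n → ∞. -/

import Mathlib

open MeasureTheory ProbabilityTheory Filter Real

noncomputable section

variable {Ω : Type*} [MeasurableSpace Ω]

/-- The equidistant `p`-variation `V_p^n(X)_t = ∑_{i=1}^{⌊nt⌋} |X_{i/n} - X_{(i-1)/n}|^p`. -/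
def pVar (p : ℝ) (n : ℕ) (X : ℝ → Ω → ℝ) (t : ℝ) (ω : Ω) : ℝ :=
  ∑ i ∈ Finset.Icc 1 ⌊(n : ℝ) * t⌋₊,
    |X ((i : ℝ) / (n : ℝ)) ω - X (((i : ℝ) - 1) / (n : ℝ)) ω| ^ p

/-- An `α`-stable Lévy process with scale `C` and skewness `β`: `L_0 = 0` a.s.,
independent and stationary increments, and the prescribed characteristic function. -/
structure IsStableLevy (P : Measure Ω) (α C β : ℝ) (L : ℝ → Ω → ℝ) : Prop where
  measurable : ∀ t : ℝ, Measurable (L t)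
  zero : ∀ᵐ ω ∂P, L 0 ω = 0
  indepIncr : ∀ (m : ℕ) (t : Fin (m + 1) → ℝ), (∀ i, 0 ≤ t i) → StrictMono t →
    iIndepFun
      (fun i : Fin m => fun ω => L (t i.succ) ω - L (t i.castSucc) ω) P
  statIncr : ∀ s t : ℝ, 0 ≤ s → 0 ≤ t →
    Measure.map (fun ω => L (t + s) ω - L s ω) P = Measure.map (L t) P
  charFun : ∀ t : ℝ, 0 ≤ t → ∀ l : ℝ,
    ∫ ω, Complex.exp (Complex.I * (l : ℂ) * (L t ω : ℂ)) ∂P =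
      Complex.exp (Complex.ofReal (-(t * C ^ α * |l| ^ α)) *
        (1 - Complex.I * Complex.ofReal (β * Real.sign l * Real.tan (π * α / 2))))

/-- The scale `C'` of the limiting process. -/
def Cprime (α C p : ℝ) : ℝ :=
  C ^ p * (Real.cos (π * α / (2 * p)) * Real.Gamma (1 - α / p) /
    (Real.cos (π * α / 2) * Real.Gamma (1 - α))) ^ (p / α)

/-- The characteristic function at time `t` of an `(α/p)`-stable totally right-skewed
Lévy process with scale `C'`. -/
def phi (α C p t l : ℝ) : ℂ :=
  Complex.exp (Complex.ofReal (-(t * Cprime α C p ^ (α / p) * |l| ^ (α / p))) *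
    (1 - Complex.I * Complex.ofReal (Real.sign l * Real.tan (π * α / (2 * p)))))

/-!
Stationarity and the characteristic function give `‖1 - E exp (iλ Δ_i^n L)‖ ≲ |λ|^α / n` for the
increments over steps of length `1/n`, and the truncation inequality turns this into the tail
bound `P(|Δ_i^n L| > x) ≲ x^(-α) / n`. By the layer-cake formula,
`E[min (|Δ_i^n L|^p) M] ≲ M^(1 - α/p) / n`, finite because `p > α`; as
`min (∑ aᵢ) M ≤ ∑ min aᵢ M`, Markov's inequality yields `P(V_p^n(L)_N ≥ M) ≲ N M^(-α/p)` uniformly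
in `n`, i.e. the `p`-variations of `L` are tight. Finally, for every `ε > 0` there is `K` with
`||x + y|^p - |x|^p| ≤ ε |x|^p + K |y|^p`, so the supremum over `t ≤ N` is at most
`ε V_p^n(L)_N + K V_p^n(Y)_N`.
-/

open scoped ENNReal Topology

lemma exists_abs_add_rpow_sub_rpow_le {p : ℝ} (hp : 0 ≤ p) {ε : ℝ} (hε : 0 < ε) :
    ∃ K, 0 < K ∧ ∀ x y : ℝ, |(|x + y| ^ p - |x| ^ p)| ≤ ε * |x| ^ p + K * |y| ^ p := by
  have hup : ∀ᶠ δ in 𝓝 (0 : ℝ), (1 + δ) ^ p < 1 + ε :=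
    ((continuousAt_const.add continuousAt_id).rpow_const (by simp)).eventually_lt
      continuousAt_const (by simpa using hε)
  have hlow : ∀ᶠ δ in 𝓝 (0 : ℝ), 1 - ε < (1 - δ) ^ p :=
    continuousAt_const.eventually_lt
      ((continuousAt_const.sub continuousAt_id).rpow_const (by simp)) (by simpa using hε)
  obtain ⟨δ, ⟨hδup, hδlow⟩, hδ0, hδ1⟩ :=
    (((hup.and hlow).filter_mono nhdsWithin_le_nhds).and (Ioo_mem_nhdsGT one_pos)).exists
  refine ⟨(1 + δ⁻¹) ^ p, by positivity, fun x y => ?_⟩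
  have hx := Real.rpow_nonneg (abs_nonneg x) p
  rcases le_or_gt |y| (δ * |x|) with hyx | hxy
  · have h₁ : |x + y| ^ p ≤ (1 + δ) ^ p * |x| ^ p := by
      rw [← Real.mul_rpow (by linarith) (abs_nonneg x)]
      gcongr
      linarith [abs_add_le x y]
    have h₂ : (1 - δ) ^ p * |x| ^ p ≤ |x + y| ^ p := by
      rw [← Real.mul_rpow (by linarith) (abs_nonneg x)]
      gcongr
      have := abs_sub_abs_le_abs_sub x (-y)
      rw [sub_neg_eq_add, abs_neg] at this
      linarith
    have h₃ := mul_le_mul_of_nonneg_right hδup.le hx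
    have h₄ := mul_le_mul_of_nonneg_right hδlow.le hx
    have : 0 ≤ (1 + δ⁻¹) ^ p * |y| ^ p := by positivity
    rw [abs_le]
    constructor <;> linarith
  · have hx' : |x| ≤ δ⁻¹ * |y| := by
      rw [le_inv_mul_iff₀ hδ0]; linarith
    have hK : ∀ z, |z| ≤ (1 + δ⁻¹) * |y| → |z| ^ p ≤ (1 + δ⁻¹) ^ p * |y| ^ p := fun z hz => by
      rw [← Real.mul_rpow (by positivity) (abs_nonneg y)]
      gcongr
    have := abs_sub_le_of_nonneg_of_le (Real.rpow_nonneg (abs_nonneg (x + y)) p)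
      (hK _ (by linarith [abs_add_le x y])) hx (hK x (by nlinarith [abs_nonneg y]))
    linarith [mul_nonneg hε.le hx]

lemma Finset.min_sum_le_sum_min {ι R : Type*} [AddCommMonoid R] [LinearOrder R]
    [IsOrderedAddMonoid R] (s : Finset ι) {a : ι → R} (ha : ∀ i ∈ s, 0 ≤ a i) {M : R} (hM : 0 ≤ M) : min (∑ i ∈ s, a i) M ≤ ∑ i ∈ s, min (a i) M := by
  by_cases h : ∃ i ∈ s, M ≤ a i
  · obtain ⟨i, hi, hMi⟩ := h
    calc min (∑ i ∈ s, a i) M ≤ min (a i) M := by rw [min_eq_right hMi]; exact min_le_right _ _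
      _ ≤ ∑ i ∈ s, min (a i) M := Finset.single_le_sum (fun j hj => le_min (ha j hj) hM) hi
  · push Not at h
    rw [Finset.sum_congr rfl fun i hi => min_eq_left (h i hi).le]
    exact min_le_left _ _

section pVar

variable {Ω : Type*} {p : ℝ} {n : ℕ} {X Y : ℝ → Ω → ℝ} {ω : Ω}

lemma pVar_nonneg (t : ℝ) : 0 ≤ pVar p n X t ω :=
  Finset.sum_nonneg fun _ _ => Real.rpow_nonneg (abs_nonneg _) p

lemma pVar_mono {s t : ℝ} (hst : s ≤ t) : pVar p n X s ω ≤ pVar p n X t ω :=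
  Finset.sum_le_sum_of_subset_of_nonneg
    (Finset.Icc_subset_Icc_right (Nat.floor_mono (by gcongr)))
    fun _ _ _ => Real.rpow_nonneg (abs_nonneg _) p

lemma abs_pVar_add_sub_le {ε K : ℝ}
    (hK : ∀ x y : ℝ, |(|x + y| ^ p - |x| ^ p)| ≤ ε * |x| ^ p + K * |y| ^ p) (t : ℝ) :
    |pVar p n (fun s ω' => X s ω' + Y s ω') t ω - pVar p n X t ω| ≤
      ε * pVar p n X t ω + K * pVar p n Y t ω := by
  simp only [pVar, ← Finset.sum_sub_distrib, Finset.mul_sum, ← Finset.sum_add_distrib]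
  refine (Finset.abs_sum_le_sum_abs _ _).trans (Finset.sum_le_sum fun i _ => ?_)
  rw [add_sub_add_comm]
  exact hK _ _

lemma iSup_abs_pVar_add_sub_le {ε K : ℝ} (hε : 0 ≤ ε) (hK₀ : 0 ≤ K)
    (hK : ∀ x y : ℝ, |(|x + y| ^ p - |x| ^ p)| ≤ ε * |x| ^ p + K * |y| ^ p) (N : ℝ) :
    ⨆ t ∈ Set.Icc (0 : ℝ) N,
        |pVar p n (fun s ω' => X s ω' + Y s ω') t ω - pVar p n X t ω| ≤
      ε * pVar p n X N ω + K * pVar p n Y N ω := by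
  have h₀ : 0 ≤ ε * pVar p n X N ω + K * pVar p n Y N ω := by
    have := pVar_nonneg (p := p) (n := n) (X := X) (ω := ω) N
    have := pVar_nonneg (p := p) (n := n) (X := Y) (ω := ω) N
    positivity
  refine Real.iSup_le (fun t => Real.iSup_le (fun ht => ?_) h₀) h₀
  refine (abs_pVar_add_sub_le hK t).trans ?_
  gcongr <;> exact pVar_mono ht.2

lemma setOf_lt_iSup_abs_pVar_add_sub_subset {ε M K : ℝ} (hε : 0 < ε) (hM : 0 < M) (hK₀ : 0 < K)
    (hK : ∀ x y : ℝ, |(|x + y| ^ p - |x| ^ p)| ≤ ε / (2 * M) * |x| ^ p + K * |y| ^ p) (N : ℝ) :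
    {ω | ε < ⨆ t ∈ Set.Icc (0 : ℝ) N,
        |pVar p n (fun s ω' => X s ω' + Y s ω') t ω - pVar p n X t ω|} ⊆
      {ω | M < pVar p n X N ω} ∪ {ω | ε / (2 * K) < |pVar p n Y N ω|} := by
  intro ω hω
  by_contra h
  simp only [Set.mem_union, Set.mem_ofPred_eq, not_or, not_lt] at h hω
  have hX : ε / (2 * M) * pVar p n X N ω ≤ ε / 2 :=
    calc _ ≤ ε / (2 * M) * M := by gcongr; exact h.1
      _ = ε / 2 := by field_simp
  have hY : K * pVar p n Y N ω ≤ ε / 2 :=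
    calc _ ≤ K * (ε / (2 * K)) := by gcongr; exact (le_abs_self _).trans h.2
      _ = ε / 2 := by field_simp
  linarith [iSup_abs_pVar_add_sub_le (X := X) (Y := Y) (n := n) (ω := ω)
    (by positivity) hK₀.le hK N]

end pVar

lemma Complex.norm_one_sub_exp_le {w : ℂ} (hw : w.re ≤ 0) : ‖1 - Complex.exp w‖ ≤ 2 * ‖w‖ := by
  rcases le_or_gt ‖w‖ 1 with hw1 | hw1
  · rw [norm_sub_rev]
    exact Complex.norm_exp_sub_one_le hw1
  · calc ‖1 - Complex.exp w‖ ≤ ‖(1 : ℂ)‖ + ‖Complex.exp w‖ := norm_sub_le _ _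
      _ ≤ 1 + 1 := by
        rw [norm_one, Complex.norm_exp]
        gcongr
        exact Real.exp_le_one_iff.mpr hw
      _ ≤ 2 * ‖w‖ := by linarith

lemma measureReal_abs_gt_le_of_norm_one_sub_charFun_le {μ : Measure ℝ} [IsProbabilityMeasure μ]
    {α c : ℝ} (hα : 0 ≤ α) (h : ∀ l, ‖1 - charFun μ l‖ ≤ c * |l| ^ α) {r : ℝ} (hr : 0 < r) :
    μ.real {x | r < |x|} ≤ 2 ^ (α + 1) * c / r ^ α := by
  have hc : 0 ≤ c := by simpa using (norm_nonneg _).trans (h 1)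
  have hbound : ∀ l ∈ Set.uIoc (-2 * r⁻¹) (2 * r⁻¹), ‖1 - charFun μ l‖ ≤ c * (2 * r⁻¹) ^ α := by
    intro l hl
    rw [Set.uIoc_of_le (by linarith [inv_pos.mpr hr])] at hl
    refine (h l).trans ?_
    gcongr
    exact abs_le.mpr ⟨by linarith [hl.1], hl.2⟩
  calc μ.real {x | r < |x|}
      ≤ 2⁻¹ * r * ‖∫ t in (-2 * r⁻¹)..(2 * r⁻¹), 1 - charFun μ t‖ :=
        measureReal_abs_gt_le_integral_charFun hr
    _ ≤ 2⁻¹ * r * (c * (2 * r⁻¹) ^ α * |2 * r⁻¹ - -2 * r⁻¹|) := by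
        gcongr
        exact intervalIntegral.norm_integral_le_of_norm_le_const hbound
    _ = 2 ^ (α + 1) * c / r ^ α := by
        rw [Real.mul_rpow (by norm_num) (by positivity), Real.inv_rpow hr.le,
          Real.rpow_add_one two_ne_zero, show 2 * r⁻¹ - -2 * r⁻¹ = 4 * r⁻¹ by ring,
          abs_of_pos (by positivity)]
        field_simp
        ring

section Tails

variable {μ : Measure Ω}

lemma lintegral_ofReal_min_le_of_measure_lt_le {Z : Ω → ℝ} (hZ : Measurable Z) (hZ₀ : 0 ≤ Z)
    {c γ a : ℝ} (hc : 0 ≤ c) (hγ : γ < 1) (ha : 0 ≤ a)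
    (htail : ∀ s, 0 < s → μ {ω | s < Z ω} ≤ ENNReal.ofReal (c * s ^ (-γ))) :
    ∫⁻ ω, ENNReal.ofReal (min (Z ω) a) ∂μ ≤ ENNReal.ofReal (c * a ^ (1 - γ) / (1 - γ)) := by
  have hint : IntegrableOn (fun s => c * s ^ (-γ)) (Set.Ioc 0 a) :=
    (intervalIntegrable_iff_integrableOn_Ioc_of_le ha).mp
      ((intervalIntegral.intervalIntegrable_rpow' (by linarith)).const_mul c)
  have hnonneg : 0 ≤ᵐ[volume.restrict (Set.Ioc 0 a)] fun s => c * s ^ (-γ) :=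
    (ae_restrict_iff' measurableSet_Ioc).mpr (ae_of_all _ fun s hs => by
      have := hs.1
      positivity)
  rw [lintegral_eq_lintegral_meas_lt μ (ae_of_all _ fun ω => le_min (hZ₀ ω) ha)
    (hZ.min measurable_const).aemeasurable]
  calc ∫⁻ s in Set.Ioi 0, μ {ω | s < min (Z ω) a}
      ≤ ∫⁻ s in Set.Ioi 0, (Set.Ioc 0 a).indicator (fun s => ENNReal.ofReal (c * s ^ (-γ))) s := by
        refine setLIntegral_mono' measurableSet_Ioi fun s hs => ?_
        by_cases hsa : s ≤ a
        · rw [Set.indicator_of_mem (show s ∈ Set.Ioc 0 a from ⟨hs, hsa⟩)]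
          refine (measure_mono fun ω (hω : s < min (Z ω) a) => ?_).trans (htail s hs)
          exact lt_of_lt_of_le hω (min_le_left _ _)
        · rw [Set.indicator_of_notMem fun h => hsa h.2]
          refine le_of_eq (measure_eq_zero_iff_ae_notMem.mpr (ae_of_all _ fun ω hω => hsa ?_))
          exact (lt_of_lt_of_le hω (min_le_right _ _)).le
    _ = ENNReal.ofReal (∫ s in (0 : ℝ)..a, c * s ^ (-γ)) := by
        rw [lintegral_indicator measurableSet_Ioc, Measure.restrict_restrict measurableSet_Ioc,
          Set.inter_eq_self_of_subset_left Set.Ioc_subset_Ioi_self,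
          intervalIntegral.integral_of_le ha, ofReal_integral_eq_lintegral_ofReal hint hnonneg]
    _ = ENNReal.ofReal (c * a ^ (1 - γ) / (1 - γ)) := by
        rw [intervalIntegral.integral_const_mul, integral_rpow (Or.inl (by linarith)),
          Real.zero_rpow (by linarith), neg_add_eq_sub, sub_zero, mul_div_assoc]

lemma measure_le_sum_abs_rpow_le {ι : Type*} (s : Finset ι) {D : ι → Ω → ℝ}
    (hD : ∀ i, Measurable (D i)) {α p c M : ℝ} (hp : 0 < p) (hαp : α < p) (hc : 0 ≤ c)
    (hM : 0 < M) (htail : ∀ i ∈ s, ∀ x, 0 < x → μ {ω | x < |D i ω|} ≤ ENNReal.ofReal (c / x ^ α)) :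
    μ {ω | M ≤ ∑ i ∈ s, |D i ω| ^ p} ≤
      ENNReal.ofReal (s.card * c / (1 - α / p) * M ^ (-(α / p))) := by
  have hγ : α / p < 1 := (div_lt_one hp).mpr hαp
  have hmeas : ∀ i, Measurable fun ω => |D i ω| ^ p := fun i => (hD i).abs.pow_const p
  set f : Ω → ℝ≥0∞ := fun ω => ∑ i ∈ s, ENNReal.ofReal (min (|D i ω| ^ p) M)
  have hsub : {ω | M ≤ ∑ i ∈ s, |D i ω| ^ p} ⊆ {ω | ENNReal.ofReal M ≤ f ω} := fun ω hω => by
    simp only [Set.mem_ofPred_eq, f] at hω ⊢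
    rw [← ENNReal.ofReal_sum_of_nonneg fun i _ => le_min (by positivity) hM.le]
    refine ENNReal.ofReal_le_ofReal ?_
    calc M = min (∑ i ∈ s, |D i ω| ^ p) M := (min_eq_right hω).symm
      _ ≤ _ := s.min_sum_le_sum_min (fun i _ => by positivity) hM.le
  have hmoment : ∀ i ∈ s, ∫⁻ ω, ENNReal.ofReal (min (|D i ω| ^ p) M) ∂μ ≤
      ENNReal.ofReal (c * M ^ (1 - α / p) / (1 - α / p)) := fun i hi =>
    lintegral_ofReal_min_le_of_measure_lt_le (hmeas i) (fun ω => by positivity) hc hγ hM.le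
      fun x hx => by
        have hset : {ω | x < |D i ω| ^ p} = {ω | x ^ p⁻¹ < |D i ω|} := by
          ext ω
          exact (Real.rpow_inv_lt_iff_of_pos hx.le (abs_nonneg _) hp).symm
        rw [hset]
        refine (htail i hi _ (by positivity)).trans_eq ?_
        rw [← Real.rpow_mul hx.le, Real.rpow_neg hx.le, inv_mul_eq_div, div_eq_mul_inv]
  calc μ {ω | M ≤ ∑ i ∈ s, |D i ω| ^ p}
      ≤ μ {ω | ENNReal.ofReal M ≤ f ω} := measure_mono hsub
    _ ≤ (∫⁻ ω, f ω ∂μ) / ENNReal.ofReal M :=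
        meas_ge_le_lintegral_div (Finset.measurable_sum _ fun i _ =>
          ((hmeas i).min measurable_const).ennreal_ofReal).aemeasurable
          (by simpa using hM) ENNReal.ofReal_ne_top
    _ ≤ (s.card * ENNReal.ofReal (c * M ^ (1 - α / p) / (1 - α / p))) / ENNReal.ofReal M := by
        gcongr
        rw [lintegral_finsetSum _ fun i _ => ((hmeas i).min measurable_const).ennreal_ofReal]
        exact (Finset.sum_le_sum hmoment).trans_eq (by simp [Finset.sum_const, nsmul_eq_mul])
    _ = ENNReal.ofReal (s.card * c / (1 - α / p) * M ^ (-(α / p))) := by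
        rw [← ENNReal.ofReal_natCast, ← ENNReal.ofReal_mul (by positivity),
          ← ENNReal.ofReal_div_of_pos hM, Real.rpow_sub hM, Real.rpow_one, Real.rpow_neg hM.le]
        congr 1
        field_simp

end Tails

namespace IsStableLevy

variable {P : Measure Ω} {α C β : ℝ} {L : ℝ → Ω → ℝ}

lemma norm_one_sub_charFun_map_le (hL : IsStableLevy P α C β L) (hC : 0 < C) {t : ℝ}
    (ht : 0 ≤ t) (l : ℝ) :
    ‖1 - MeasureTheory.charFun (P.map (L t)) l‖ ≤
      2 * C ^ α * (1 + |β * Real.tan (π * α / 2)|) * t * |l| ^ α := by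
  have hchar :
      MeasureTheory.charFun (P.map (L t)) l = ∫ ω, Complex.exp (Complex.I * l * L t ω) ∂P := by
    rw [charFun_apply_real, integral_map (hL.measurable t).aemeasurable (by fun_prop)]
    simp only [mul_comm Complex.I, mul_assoc]
  rw [hchar, hL.charFun t ht l]
  set r := t * C ^ α * |l| ^ α
  set b := β * Real.sign l * Real.tan (π * α / 2)
  have hr : 0 ≤ r := by positivity
  have hb : |b| ≤ |β * Real.tan (π * α / 2)| := by
    have hsign : |Real.sign l| ≤ 1 := by
      rcases Real.sign_apply_eq l with h | h | h <;> simp [h]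
    rw [abs_mul, abs_mul, abs_mul, mul_right_comm]
    exact mul_le_of_le_one_right (by positivity) hsign
  refine (Complex.norm_one_sub_exp_le (by simp [hr])).trans ?_
  calc 2 * ‖((-r : ℝ) : ℂ) * (1 - Complex.I * (b : ℂ))‖
      ≤ 2 * (r * (1 + |b|)) := by
        rw [norm_mul, Complex.norm_real, Real.norm_eq_abs, abs_neg, abs_of_nonneg hr]
        gcongr
        exact (norm_sub_le _ _).trans (by simp)
    _ ≤ 2 * (r * (1 + |β * Real.tan (π * α / 2)|)) := by gcongr
    _ = 2 * C ^ α * (1 + |β * Real.tan (π * α / 2)|) * t * |l| ^ α := by ring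

lemma exists_measure_abs_increment_gt_le [IsProbabilityMeasure P] (hL : IsStableLevy P α C β L)
    (hα : 0 ≤ α) (hC : 0 < C) :
    ∃ c, 0 ≤ c ∧ ∀ s t, 0 ≤ s → 0 ≤ t → ∀ x, 0 < x →
      P {ω | x < |L (t + s) ω - L s ω|} ≤ ENNReal.ofReal (c * t / x ^ α) := by
  refine ⟨2 ^ (α + 1) * (2 * C ^ α * (1 + |β * Real.tan (π * α / 2)|)), by positivity,
    fun s t hs ht x hx => ?_⟩
  have := Measure.isProbabilityMeasure_map (μ := P) (hL.measurable t).aemeasurable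
  have hset : MeasurableSet {y : ℝ | x < |y|} := measurableSet_lt measurable_const measurable_abs
  calc P {ω | x < |L (t + s) ω - L s ω|}
      = P.map (fun ω => L (t + s) ω - L s ω) {y | x < |y|} :=
        (Measure.map_apply ((hL.measurable _).sub (hL.measurable _)) hset).symm
    _ = ENNReal.ofReal ((P.map (L t)).real {y | x < |y|}) := by
        rw [hL.statIncr s t hs ht, ofReal_measureReal]
    _ ≤ _ := ENNReal.ofReal_le_ofReal <|
        (measureReal_abs_gt_le_of_norm_one_sub_charFun_le hα
          (hL.norm_one_sub_charFun_map_le hC ht) hx).trans_eq (by ring)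

lemma exists_measure_pVar_ge_le [IsProbabilityMeasure P] (hL : IsStableLevy P α C β L)
    (hα : 0 ≤ α) (hC : 0 < C) {p : ℝ} (hp : 0 < p) (hαp : α < p) {N : ℝ} (hN : 0 ≤ N) :
    ∃ c, ∀ (n : ℕ) (M : ℝ), 0 < M →
      P {ω | M ≤ pVar p n L N ω} ≤ ENNReal.ofReal (c * M ^ (-(α / p))) := by
  obtain ⟨c, hc, htail⟩ := hL.exists_measure_abs_increment_gt_le hα hC
  refine ⟨N * c / (1 - α / p), fun n M hM => ?_⟩
  have hincr : ∀ i ∈ Finset.Icc 1 ⌊(n : ℝ) * N⌋₊, ∀ x : ℝ, 0 < x →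
      P {ω | x < |L ((i : ℝ) / n) ω - L (((i : ℝ) - 1) / n) ω|} ≤
        ENNReal.ofReal (c * (n : ℝ)⁻¹ / x ^ α) := by
    intro i hi x hx
    have hi₁ : (1 : ℝ) ≤ i := by exact_mod_cast (Finset.mem_Icc.mp hi).1
    have := htail (((i : ℝ) - 1) / n) (n : ℝ)⁻¹ (div_nonneg (by linarith) n.cast_nonneg)
      (by positivity) x hx
    rwa [show (n : ℝ)⁻¹ + ((i : ℝ) - 1) / n = i / n by ring] at this
  have hfloor : (⌊(n : ℝ) * N⌋₊ : ℝ) * (n : ℝ)⁻¹ ≤ N := by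
    rcases n.eq_zero_or_pos with rfl | hn
    · simpa using hN
    · rw [← div_eq_mul_inv, div_le_iff₀ (by positivity), mul_comm N]
      exact Nat.floor_le (by positivity)
  refine (measure_le_sum_abs_rpow_le _ (fun i => (hL.measurable _).sub (hL.measurable _)) hp hαp
    (by positivity) hM hincr).trans (ENNReal.ofReal_le_ofReal ?_)
  have hγ : 0 < 1 - α / p := sub_pos.mpr ((div_lt_one hp).mpr hαp)
  gcongr ?_ / _ * _
  rw [Nat.card_Icc, Nat.add_sub_cancel, mul_comm N, ← mul_assoc, mul_comm _ c, mul_assoc]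
  exact mul_le_mul_of_nonneg_left hfloor hc

lemma exists_forall_measure_pVar_gt_le [IsProbabilityMeasure P]
    (hL : IsStableLevy P α C β L) (hα : 0 < α) (hC : 0 < C)
    {p : ℝ} (hαp : α < p) {N : ℝ} (hN : 0 ≤ N) {η : ℝ≥0∞} (hη : 0 < η) :
    ∃ M > 0, ∀ n : ℕ, P {ω | M < pVar p n L N ω} ≤ η := by
  have hp := hα.trans hαp
  obtain ⟨c, hc⟩ := hL.exists_measure_pVar_ge_le hα.le hC hp hαp hN
  have hlim : Tendsto (fun M : ℝ => ENNReal.ofReal (c * M ^ (-(α / p)))) atTop (nhds 0) := by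
    simpa using ENNReal.tendsto_ofReal ((tendsto_rpow_neg_atTop (div_pos hα hp)).const_mul c)
  obtain ⟨M, hMη, hM⟩ := ((hlim.eventually (Iio_mem_nhds hη)).and (eventually_gt_atTop 0)).exists
  exact ⟨M, hM, fun n =>
    (measure_mono fun ω (hω : M < _) => hω.le).trans ((hc n M hM).trans hMη.le)⟩

end IsStableLevy

theorem pvar_perturbation_gt_alpha_general (P : Measure Ω) [IsProbabilityMeasure P]
    (α C β p : ℝ) (hα : α ∈ Set.Ioo (0 : ℝ) 2) (hC : 0 < C)
    (L : ℝ → Ω → ℝ)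
    (hL : IsStableLevy P α C β L) (hp : α < p)
    (Y : ℝ → Ω → ℝ)
    (hY : ∀ t : ℝ, 0 < t → ∀ ε : ℝ, 0 < ε →
      Tendsto (fun n : ℕ => P {ω | ε < |pVar p n Y t ω|}) atTop (nhds 0)) :
    ∀ N : ℝ, 0 < N → ∀ ε : ℝ, 0 < ε →
      Tendsto (fun n : ℕ => P {ω | ε <
          ⨆ t ∈ Set.Icc (0 : ℝ) N,
            |pVar p n (fun s ω' => L s ω' + Y s ω') t ω - pVar p n L t ω|})
        atTop (nhds 0) := by
  intro N hN ε hε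
  rw [ENNReal.tendsto_nhds_zero]
  intro η hη
  obtain ⟨M, hM, hLM⟩ :=
    hL.exists_forall_measure_pVar_gt_le hα.1 hC hp hN.le (ENNReal.half_pos hη.ne')
  obtain ⟨K, hK₀, hK⟩ :=
    exists_abs_add_rpow_sub_rpow_le (hα.1.trans hp).le (show 0 < ε / (2 * M) by positivity)
  filter_upwards [ENNReal.tendsto_nhds_zero.mp (hY N hN (ε / (2 * K)) (by positivity)) _
    (ENNReal.half_pos hη.ne')] with n hYn
  calc _ ≤ P ({ω | M < pVar p n L N ω} ∪ {ω | ε / (2 * K) < |pVar p n Y N ω|}) :=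
        measure_mono (setOf_lt_iSup_abs_pVar_add_sub_subset hε hM hK₀ hK N)
    _ ≤ η / 2 + η / 2 := (measure_union_le _ _).trans (add_le_add (hLM n) hYn)
    _ = η := ENNReal.add_halves η

theorem pvar_perturbation_gt_alpha (P : Measure Ω) [IsProbabilityMeasure P]
    (α C β p : ℝ) (hα : α ∈ Set.Ioo (0 : ℝ) 2) (hα1 : α ≠ 1) (hC : 0 < C)
    (hβ : β ∈ Set.Icc (-1 : ℝ) 1) (L : ℝ → Ω → ℝ)
    (hL : IsStableLevy P α C β L) (hp : α < p)
    (Y : ℝ → Ω → ℝ)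
    (hY : ∀ t : ℝ, 0 < t → ∀ ε : ℝ, 0 < ε →
      Tendsto (fun n : ℕ => P {ω | ε < |pVar p n Y t ω|}) atTop (nhds 0)) :
    ∀ N : ℝ, 0 < N → ∀ ε : ℝ, 0 < ε →
      Tendsto (fun n : ℕ => P {ω | ε <
          ⨆ t ∈ Set.Icc (0 : ℝ) N,
            |pVar p n (fun s ω' => L s ω' + Y s ω') t ω - pVar p n L t ω|})
        atTop (nhds 0) :=
  pvar_perturbation_gt_alpha_general P α C β p hα hC L hL hp Y hY
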